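/- arXiv:2307.13478 — 6 statements merged into one kernel-verified Lean document; each statement's English description precedes it below -/
import Mathlib

section
/- For x,y real with |y|>1/2, the expression -(y-1/2)/(x^2+(y-1/2)^2) + (y+1/2)/(x^2+(y+1/2)^2) - 1 < 1. -/
theorem stmt_1 (x y : ℝ) (hy : |y| > 1 / 2) :
    -(y - 1/2) / (x ^ 2 + (y - 1/2) ^ 2) + (y + 1/2) / (x ^ 2 + (y + 1/2) ^ 2) - 1 < 1 := by
  rcases lt_abs.mp hy with h | h
  · -- y > 1/2
    have hd1 : (0:ℝ) < x ^ 2 + (y - 1/2) ^ 2 :=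
      add_pos_of_nonneg_of_pos (sq_nonneg x) (by nlinarith)
    have hA : -(y - 1/2) / (x ^ 2 + (y - 1/2) ^ 2) < 0 :=
      div_neg_of_neg_of_pos (by linarith) hd1
    have hB : (y + 1/2) / (x ^ 2 + (y + 1/2) ^ 2) ≤ 1 := by
      rw [div_le_one (by positivity)]
      nlinarith [sq_nonneg x, sq_nonneg (y - 1/2)]
    linarith
  · -- y < -1/2
    have hd2 : (0:ℝ) < x ^ 2 + (y + 1/2) ^ 2 :=
      add_pos_of_nonneg_of_pos (sq_nonneg x) (by nlinarith)
    have hB : (y + 1/2) / (x ^ 2 + (y + 1/2) ^ 2) < 0 :=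
      div_neg_of_neg_of_pos (by linarith) hd2
    have hd1 : (0:ℝ) < x ^ 2 + (y - 1/2) ^ 2 :=
      add_pos_of_nonneg_of_pos (sq_nonneg x) (by nlinarith)
    have hA : -(y - 1/2) / (x ^ 2 + (y - 1/2) ^ 2) ≤ 1 := by
      rw [div_le_one hd1]
      nlinarith [sq_nonneg x, sq_nonneg (y + 1/2)]
    linarith
end

section
/- There exists a unique ỹ > 1/2 such that -ỹ^2 + ỹ·coth(ỹ) - 1/4 = 0, and the function y ↦ -y^2 + y·coth(y) - 1/4 is positive on (0, ỹ) and negative on (ỹ, ∞). -/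
/-!
Writing `g y = -y ^ 2 + y * coth y - 1/4`, one has
`g' y = -2 y + (sinh y cosh y - y) / sinh y ^ 2`, which is negative for `y > 0` because
`sinh (2y) < 2y cosh (2y)`. So `g` is strictly decreasing on `(0, ∞)`; as `g (1/2) > 0 > g 2`,
it has exactly one zero there, and that zero lies in `(1/2, 2)`.
-/

open Real Set

theorem Real.sinh_lt_mul_cosh {t : ℝ} (ht : 0 < t) : sinh t < t * cosh t := by
  have hmono : StrictMonoOn (fun x => x * cosh x - sinh x) (Ici 0) := by
    refine strictMonoOn_of_hasDerivWithinAt_pos (convex_Ici 0) (by fun_prop)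
      (fun x _ => (((hasDerivAt_id x).mul (hasDerivAt_cosh x)).sub
        (hasDerivAt_sinh x)).hasDerivWithinAt) fun x hx => ?_
    rw [interior_Ici] at hx
    have : 0 < x * sinh x := mul_pos hx (sinh_pos_iff.mpr hx)
    simp only [id, one_mul]
    linarith
  simpa using hmono self_mem_Ici ht.le ht

namespace StabilityIsland

noncomputable def g (y : ℝ) : ℝ := -y ^ 2 + y * (cosh y / sinh y) - 1/4

theorem hasDerivAt_g {y : ℝ} (hy : 0 < y) :
    HasDerivAt g (-2 * y + (sinh y * cosh y - y) / sinh y ^ 2) y := by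
  have hs : sinh y ≠ 0 := (sinh_pos_iff.mpr hy).ne'
  have hg : g = fun x => -x ^ 2 + x * cosh x / sinh x - 1/4 := by
    funext x; simp only [g, mul_div_assoc]
  rw [hg]
  refine (((hasDerivAt_pow 2 y).fun_neg.fun_add (((hasDerivAt_id' y).fun_mul
    (hasDerivAt_cosh y)).fun_div (hasDerivAt_sinh y) hs)).sub_const (1/4)).congr_deriv ?_
  field_simp
  linear_combination (-y) * cosh_sq y

theorem deriv_g_neg {y : ℝ} (hy : 0 < y) : deriv g y < 0 := by
  rw [(hasDerivAt_g hy).deriv]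
  have h2y := sinh_lt_mul_cosh (by linarith : 0 < 2 * y)
  rw [sinh_two_mul, cosh_two_mul] at h2y
  have : (sinh y * cosh y - y) / sinh y ^ 2 < 2 * y :=
    (div_lt_iff₀ (by positivity)).mpr (by nlinarith [cosh_sq y])
  linarith

theorem strictAntiOn_g : StrictAntiOn g (Ioi 0) :=
  strictAntiOn_of_deriv_neg (convex_Ioi 0)
    (fun _ hy => (hasDerivAt_g hy).continuousAt.continuousWithinAt)
    (fun _ hy => deriv_g_neg (by simpa using hy))

theorem g_half_pos : 0 < g (1/2) := by
  have hs : 0 < sinh (1/2 : ℝ) := sinh_pos_iff.mpr (by norm_num)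
  have hcoth : 1 < cosh (1/2) / sinh (1/2 : ℝ) := (one_lt_div hs).mpr (sinh_lt_cosh _)
  simp only [g]
  linarith

theorem g_two_neg : g 2 < 0 := by
  have hs : 0 < sinh (2 : ℝ) := sinh_pos_iff.mpr (by norm_num)
  -- `cosh 2 < 2 sinh 2` amounts to `exp 4 > 3`, and already `exp 2 ≥ 3`.
  have hcoth : cosh 2 < 2 * sinh (2 : ℝ) := by
    have h3 : 3 ≤ exp 2 := by linarith [add_one_le_exp 2]
    have hinv : exp 2 * exp (-2) = 1 := by rw [← exp_add]; norm_num
    rw [cosh_eq, sinh_eq]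
    nlinarith [exp_pos (-2)]
  have : cosh 2 / sinh (2 : ℝ) < 2 := (div_lt_iff₀ hs).mpr hcoth
  simp only [g]
  linarith

end StabilityIsland

open StabilityIsland

theorem stmt_5 :
    ∃ yt : ℝ, yt > 1/2 ∧ (-yt ^ 2 + yt * (Real.cosh yt / Real.sinh yt) - 1/4 = 0) ∧
      (∀ y : ℝ, 0 < y → y < yt → 0 < -y ^ 2 + y * (Real.cosh y / Real.sinh y) - 1/4) ∧
      (∀ y : ℝ, yt < y → -y ^ 2 + y * (Real.cosh y / Real.sinh y) - 1/4 < 0) ∧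
      (∀ y' : ℝ, y' > 1/2 → -y' ^ 2 + y' * (Real.cosh y' / Real.sinh y') - 1/4 = 0 → y' = yt) := by
  obtain ⟨yt, ⟨hlo, -⟩, hyt⟩ : ∃ yt ∈ Ioo (1/2 : ℝ) 2, g yt = 0 :=
    intermediate_value_Ioo' (by norm_num)
      (fun y hy => (hasDerivAt_g (by linarith [hy.1])).continuousAt.continuousWithinAt)
      ⟨g_two_neg, g_half_pos⟩
  have hyt0 : (0 : ℝ) < yt := by linarith
  refine ⟨yt, hlo, hyt, fun y hy hlt => ?_, fun y hlt => ?_, fun y hy hgy => ?_⟩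
  · exact (hyt ▸ strictAntiOn_g hy hyt0 hlt : 0 < g y)
  · exact (hyt ▸ strictAntiOn_g hyt0 (hyt0.trans hlt) hlt : g y < 0)
  · exact strictAntiOn_g.injOn (show 0 < y by linarith) hyt0 (hgy.trans hyt.symm : g y = g yt)
end

section
/- The Jacobian matrix of the vector field F(x,y) = (-(y-1/2)/(x^2+(y-1/2)^2) + (y+1/2)/(x^2+(y+1/2)^2) - 1, x/(x^2+(y-1/2)^2) - x/(x^2+(y+1/2)^2)) evaluated at the point (√3/2, 0) equals the diagonal matrix diag(-√3, √3), and at (-√3/2, 0) it equals diag(√3, -√3). -/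
/-!
F is the difference of the point-vortex fields centred at (0, 1/2) and (0, -1/2), minus the
uniform stream (1, 0). The vortex field at (0, c) has the symmetric traceless Jacobian
`[[2xy', y'² - x²], [y'² - x², -2xy']] / r⁴` with `y' = y - c`, `r² = x² + y'²`. At the
stagnation points `(±√3/2, 0)` both vortices are at distance 1, the off-diagonal entries of the
two Jacobians agree and cancel, and the diagonal entries `∓√3/2` and `±√3/2` subtract.
-/

open ContinuousLinearMap

noncomputable def pointVortex (c : ℝ) (p : ℝ × ℝ) : ℝ × ℝ :=
  (-(p.2 - c) / (p.1 ^ 2 + (p.2 - c) ^ 2), p.1 / (p.1 ^ 2 + (p.2 - c) ^ 2))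

noncomputable def vortexPairField (p : ℝ × ℝ) : ℝ × ℝ :=
  pointVortex (1 / 2) p - pointVortex (-1 / 2) p - (1, 0)

def symmTracelessCLM (a b : ℝ) : ℝ × ℝ →L[ℝ] ℝ × ℝ :=
  (a • fst ℝ ℝ ℝ + b • snd ℝ ℝ ℝ).prod (b • fst ℝ ℝ ℝ - a • snd ℝ ℝ ℝ)

theorem hasFDerivAt_pointVortex (c : ℝ) {p : ℝ × ℝ} (hp : p.1 ^ 2 + (p.2 - c) ^ 2 ≠ 0) :
    HasFDerivAt (pointVortex c)
      (symmTracelessCLM (2 * p.1 * (p.2 - c) / (p.1 ^ 2 + (p.2 - c) ^ 2) ^ 2)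
        (((p.2 - c) ^ 2 - p.1 ^ 2) / (p.1 ^ 2 + (p.2 - c) ^ 2) ^ 2)) p := by
  have hx : HasFDerivAt (fun q : ℝ × ℝ => q.1) (fst ℝ ℝ ℝ) p := hasFDerivAt_fst
  have hy : HasFDerivAt (fun q : ℝ × ℝ => q.2 - c) (snd ℝ ℝ ℝ) p := hasFDerivAt_snd.sub_const c
  have hinv := (hasFDerivAt_inv hp).comp p ((hx.pow 2).add (hy.pow 2))
  have h := (hy.neg.mul hinv).prodMk (hx.mul hinv)
  refine (h.congr_fderiv ?_).congr_of_eventuallyEq (Filter.Eventually.of_forall fun q => ?_)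
  · refine ContinuousLinearMap.ext fun v => Prod.ext ?_ ?_ <;>
      simp only [Pi.neg_apply, neg_sub, Nat.add_one_sub_one, pow_one, nsmul_eq_mul,
        Nat.cast_ofNat, comp_add, comp_smulₛₗ, Real.ringHom_apply, smul_add, Function.comp_apply,
        Pi.add_apply, smul_neg, ContinuousLinearMap.prod_apply, add_apply, smul_apply, comp_apply,
        coe_fst', toSpanSingleton_apply, smul_eq_mul, mul_neg, coe_snd', neg_apply,
        symmTracelessCLM, sub_apply] <;>
      field_simp <;> ring
  · simp [pointVortex, div_eq_mul_inv]

theorem hasFDerivAt_vortexPairField_of_sq_eq_three {s : ℝ} (hs : s ^ 2 = 3) :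
    HasFDerivAt vortexPairField (((-s) • fst ℝ ℝ ℝ).prod (s • snd ℝ ℝ ℝ)) (s / 2, 0) := by
  have hr : (s / 2) ^ 2 + 1 / 4 = 1 := by linear_combination hs / 4
  have h := ((hasFDerivAt_pointVortex (1 / 2) (p := (s / 2, 0)) (by norm_num [hr])).sub
    (hasFDerivAt_pointVortex (-1 / 2) (by norm_num [hr]))).sub_const (1, 0)
  refine h.congr_fderiv (ContinuousLinearMap.ext fun v => Prod.ext ?_ ?_) <;>
    norm_num [symmTracelessCLM, div_pow, hs] <;> ring

theorem stmt_6 :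
    (let F : ℝ × ℝ → ℝ × ℝ := fun p =>
      (-(p.2 - 1/2) / (p.1 ^ 2 + (p.2 - 1/2) ^ 2)
          + (p.2 + 1/2) / (p.1 ^ 2 + (p.2 + 1/2) ^ 2) - 1,
        p.1 / (p.1 ^ 2 + (p.2 - 1/2) ^ 2) - p.1 / (p.1 ^ 2 + (p.2 + 1/2) ^ 2));
    HasFDerivAt F
      (((-Real.sqrt 3) • (ContinuousLinearMap.fst ℝ ℝ ℝ)).prod
        ((Real.sqrt 3) • (ContinuousLinearMap.snd ℝ ℝ ℝ)))
      (Real.sqrt 3 / 2, 0) ∧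
    HasFDerivAt F
      (((Real.sqrt 3) • (ContinuousLinearMap.fst ℝ ℝ ℝ)).prod
        ((-Real.sqrt 3) • (ContinuousLinearMap.snd ℝ ℝ ℝ)))
      (-(Real.sqrt 3 / 2), 0)) := by
  intro F
  have hF : F = vortexPairField := by
    funext p
    ext <;> simp only [F, vortexPairField, pointVortex, Prod.fst_sub, Prod.snd_sub] <;> ring
  have h3 : Real.sqrt 3 ^ 2 = 3 := Real.sq_sqrt (by norm_num)
  rw [hF]
  refine ⟨hasFDerivAt_vortexPairField_of_sq_eq_three h3, ?_⟩
  simpa [neg_div] using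
    hasFDerivAt_vortexPairField_of_sq_eq_three (s := -Real.sqrt 3) (by rwa [neg_sq])
end

section
/- Let γ be real with γ ∉ {0,1}. The complex equation (1-|w|^2)w + γ(1-γ)w* = (1-2γ)(1-|w|^2) with w = x+iy and y ≠ 0 has exactly the two solutions w = (1-2γ)/2 ± i√3/2. -/
/-!
Write `w = x + iy` and `c = γ(1 - γ)`. The imaginary part of the equation is
`(1 - |w|² - c) y = 0`, so `y ≠ 0` forces `|w|² = 1 - c`; the real part then reduces to
`2 c x = (1 - 2γ) c`, and `c ≠ 0` gives `x = (1 - 2γ)/2`. Finally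
`y² = 1 - c - x² = 3/4` for every `γ`.
-/

open Complex ComplexConjugate

theorem stagnation_eq_iff_of_im_ne_zero {b c : ℝ} (hc : c ≠ 0) {w : ℂ} (hw : w.im ≠ 0) :
    (1 - (‖w‖ : ℂ) ^ 2) * w + c * conj w = b * (1 - (‖w‖ : ℂ) ^ 2) ↔
      ‖w‖ ^ 2 = 1 - c ∧ 2 * w.re = b := by
  have hnorm : (‖w‖ : ℂ) ^ 2 = ((‖w‖ ^ 2 : ℝ) : ℂ) := by push_cast; rfl
  rw [hnorm, Complex.ext_iff]
  simp only [add_re, add_im, mul_re, mul_im, sub_re, sub_im, one_re, one_im, ofReal_re,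
    ofReal_im, conj_re, conj_im]
  constructor
  · rintro ⟨hre, him⟩
    have hr : ‖w‖ ^ 2 = 1 - c := by
      have : (1 - ‖w‖ ^ 2 - c) * w.im = 0 := by linarith
      linarith [(mul_eq_zero.1 this).resolve_right hw]
    refine ⟨hr, mul_left_cancel₀ hc ?_⟩
    rw [hr] at hre
    linarith
  · rintro ⟨hr, hx⟩
    rw [hr, ← hx]
    constructor <;> ring

theorem eq_add_I_mul_or_eq_sub_I_mul_iff {w : ℂ} {a s : ℝ} :
    w = a + I * s ∨ w = a - I * s ↔ w.re = a ∧ w.im ^ 2 = s ^ 2 := by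
  simp only [Complex.ext_iff, add_re, sub_re, add_im, sub_im, ofReal_re, ofReal_im, mul_re,
    mul_im, I_re, I_im, sq_eq_sq_iff_eq_or_eq_neg]
  constructor
  · rintro (⟨hre, him⟩ | ⟨hre, him⟩)
    · exact ⟨by linarith, .inl (by linarith)⟩
    · exact ⟨by linarith, .inr (by linarith)⟩
  · rintro ⟨hre, him | him⟩
    · exact .inl ⟨by linarith, by linarith⟩
    · exact .inr ⟨by linarith, by linarith⟩

theorem stmt_11 (γ : ℝ) (h0 : γ ≠ 0) (h1 : γ ≠ 1) (w : ℂ) (hw : w.im ≠ 0) :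
    ((1 - (‖w‖ : ℂ) ^ 2) * w + (γ : ℂ) * (1 - γ) * (starRingEnd ℂ w)
        = (1 - 2 * γ) * (1 - (‖w‖ : ℂ) ^ 2))
      ↔ w = ((1 - 2 * γ) / 2 : ℂ) + Complex.I * (Real.sqrt 3 / 2 : ℝ)
        ∨ w = ((1 - 2 * γ) / 2 : ℂ) - Complex.I * (Real.sqrt 3 / 2 : ℝ) := by
  have hc : γ * (1 - γ) ≠ 0 := mul_ne_zero h0 (sub_ne_zero.2 h1.symm)
  have hstag := stagnation_eq_iff_of_im_ne_zero (b := 1 - 2 * γ) hc hw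
  have hsol := eq_add_I_mul_or_eq_sub_I_mul_iff (w := w) (a := (1 - 2 * γ) / 2) (s := √3 / 2)
  push_cast at hstag
  rw [show (((1 - 2 * γ) / 2 : ℝ) : ℂ) = (1 - 2 * γ) / 2 by push_cast; rfl] at hsol
  rw [hstag, hsol, Complex.sq_norm, Complex.normSq_apply, div_pow, Real.sq_sqrt zero_le_three]
  constructor
  · rintro ⟨hr, hx⟩
    have hre : w.re = (1 - 2 * γ) / 2 := by linarith
    rw [hre] at hr
    exact ⟨hre, by linear_combination hr⟩
  · rintro ⟨hre, him⟩
    rw [hre]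
    exact ⟨by linear_combination him, by ring⟩
end

section
/- If 0 < γ < 1, the cubic x^3 + (2γ-1)x^2 + (γ(γ-1)-1)x + (1-2γ) has three distinct real roots; if γ < 0 or γ > 1, it has exactly one real root. -/
/-!
The values of the cubic at `-1` and `1` are `-γ(γ-1)` and `γ(γ-1)`, while it is negative at `-3`
and positive at `3` for every `γ`. For `0 < γ < 1` this gives three sign changes, hence three
roots in `(-3, -1)`, `(-1, 1)`, `(1, 3)`. For `γ < 0` or `γ > 1` the sign change on `(-1, 1)`
gives a root, and the discriminant `-γ(γ-1)(3γ² - 3γ + 32)` is negative, which rules out a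
second real root: two distinct real roots force a third one, and then the discriminant is the
square of a real number.
-/

open Polynomial Set

namespace Cubic

variable {K : Type*} [Field K]

theorem eval_toPoly (P : Cubic K) (x : K) :
    P.toPoly.eval x = P.a * x ^ 3 + P.b * x ^ 2 + P.c * x + P.d := by
  simp only [toPoly, eval_C, eval_X, eval_add, eval_mul, eval_pow]

theorem eq_of_isRoot_of_discr_neg [LinearOrder K] [IsStrictOrderedRing K] {P : Cubic K}
    (ha : P.a ≠ 0) (hdiscr : P.discr < 0) {x y : K} (hx : P.toPoly.IsRoot x)
    (hy : P.toPoly.IsRoot y) : x = y := by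
  obtain ⟨a, b, c, d⟩ := P
  rw [IsRoot, eval_toPoly] at hx hy
  dsimp only at ha hdiscr hx hy
  by_contra hxy
  have hquot : a * (x ^ 2 + x * y + y ^ 2) + b * (x + y) + c = 0 := by
    refine (mul_eq_zero.mp ?_).resolve_left (sub_ne_zero.mpr hxy)
    linear_combination hx - hy
  -- `r` is the third root, fixed by Vieta's formula for the sum of the roots.
  obtain ⟨r, rfl⟩ : ∃ r, b = -a * (x + y + r) := ⟨-b / a - x - y, by field_simp; ring⟩
  obtain rfl : c = a * (x * y + x * r + y * r) := by linear_combination hquot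
  obtain rfl : d = -a * (x * y * r) := by linear_combination hx - x * hquot
  refine hdiscr.not_ge ?_
  calc (0 : K) ≤ (a ^ 2 * ((x - y) * (x - r) * (y - r))) ^ 2 := sq_nonneg _
    _ = _ := by simp only [discr]; ring

end Cubic

theorem Polynomial.exists_isRoot_mem_Ioo_of_mul_neg {p : ℝ[X]} {a b : ℝ} (hab : a ≤ b)
    (hsign : p.eval a * p.eval b < 0) : ∃ x ∈ Ioo a b, p.IsRoot x := by
  have hcont : ContinuousOn (fun x => p.eval x) (Icc a b) := p.continuous.continuousOn
  rcases mul_neg_iff.mp hsign with ⟨ha, hb⟩ | ⟨ha, hb⟩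
  · exact intermediate_value_Ioo' hab hcont ⟨hb, ha⟩
  · exact intermediate_value_Ioo hab hcont ⟨ha, hb⟩

noncomputable def stagnationCubic (γ : ℝ) : Cubic ℝ :=
  ⟨1, 2 * γ - 1, γ * (γ - 1) - 1, 1 - 2 * γ⟩

namespace stagnationCubic

variable (γ : ℝ)

theorem eval (x : ℝ) : (stagnationCubic γ).toPoly.eval x =
    x ^ 3 + (2 * γ - 1) * x ^ 2 + (γ * (γ - 1) - 1) * x + (1 - 2 * γ) := by
  rw [Cubic.eval_toPoly, stagnationCubic, one_mul]

theorem discr : (stagnationCubic γ).discr = -(γ * (γ - 1)) * (3 * γ ^ 2 - 3 * γ + 32) := by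
  simp only [Cubic.discr, stagnationCubic]; ring

theorem eval_neg_three_neg : (stagnationCubic γ).toPoly.eval (-3) < 0 := by
  rw [eval]; nlinarith [sq_nonneg (γ - 3)]

theorem eval_neg_one : (stagnationCubic γ).toPoly.eval (-1) = -(γ * (γ - 1)) := by
  rw [eval]; ring

theorem eval_one : (stagnationCubic γ).toPoly.eval 1 = γ * (γ - 1) := by
  rw [eval]; ring

theorem eval_three_pos : 0 < (stagnationCubic γ).toPoly.eval 3 := by
  rw [eval]; nlinarith [sq_nonneg (γ + 2)]

variable {γ}

theorem exists_three_roots (h0 : 0 < γ) (h1 : γ < 1) :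
    ∃ a b c : ℝ, a < b ∧ b < c ∧ (stagnationCubic γ).toPoly.IsRoot a ∧
      (stagnationCubic γ).toPoly.IsRoot b ∧ (stagnationCubic γ).toPoly.IsRoot c := by
  have hneg : γ * (γ - 1) < 0 := mul_neg_of_pos_of_neg h0 (by linarith)
  have h₁ := eval_neg_one γ ▸ neg_pos.mpr hneg
  have h₂ := eval_one γ ▸ hneg
  obtain ⟨a, ⟨-, ha⟩, hra⟩ := exists_isRoot_mem_Ioo_of_mul_neg (by norm_num)
    (mul_neg_of_neg_of_pos (eval_neg_three_neg γ) h₁)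
  obtain ⟨b, ⟨hb₁, hb₂⟩, hrb⟩ := exists_isRoot_mem_Ioo_of_mul_neg (by norm_num)
    (mul_neg_of_pos_of_neg h₁ h₂)
  obtain ⟨c, ⟨hc, -⟩, hrc⟩ := exists_isRoot_mem_Ioo_of_mul_neg (by norm_num)
    (mul_neg_of_neg_of_pos h₂ (eval_three_pos γ))
  exact ⟨a, b, c, ha.trans hb₁, hb₂.trans hc, hra, hrb, hrc⟩

theorem existsUnique_root (h : γ < 0 ∨ 1 < γ) :
    ∃! x : ℝ, (stagnationCubic γ).toPoly.IsRoot x := by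
  have hpos : 0 < γ * (γ - 1) := by
    rcases h with h | h
    · exact mul_pos_of_neg_of_neg h (by linarith)
    · exact mul_pos (by linarith) (by linarith)
  have hdiscr : (stagnationCubic γ).discr < 0 := by
    rw [discr]; nlinarith [sq_nonneg (2 * γ - 1)]
  obtain ⟨x, -, hx⟩ := exists_isRoot_mem_Ioo_of_mul_neg (by norm_num)
    (by rw [eval_neg_one, eval_one]; nlinarith : (stagnationCubic γ).toPoly.eval (-1) *
      (stagnationCubic γ).toPoly.eval 1 < 0)
  exact ⟨x, hx, fun y hy => Cubic.eq_of_isRoot_of_discr_neg one_ne_zero hdiscr hy hx⟩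

end stagnationCubic

theorem stmt_14 (γ : ℝ) :
    (let p : ℝ → ℝ := fun x =>
      x ^ 3 + (2 * γ - 1) * x ^ 2 + (γ * (γ - 1) - 1) * x + (1 - 2 * γ);
    (0 < γ → γ < 1 →
      ∃ a b c : ℝ, a ≠ b ∧ a ≠ c ∧ b ≠ c ∧ p a = 0 ∧ p b = 0 ∧ p c = 0) ∧
    (γ < 0 ∨ γ > 1 → ∃! x : ℝ, p x = 0)) := by
  intro p
  have hp : ∀ x, p x = 0 ↔ (stagnationCubic γ).toPoly.IsRoot x := fun x => by
    rw [IsRoot, stagnationCubic.eval]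
  simp only [hp]
  refine ⟨fun h0 h1 => ?_, fun h => stagnationCubic.existsUnique_root h⟩
  obtain ⟨a, b, c, hab, hbc, ha, hb, hc⟩ := stagnationCubic.exists_three_roots h0 h1
  exact ⟨a, b, c, hab.ne, (hab.trans hbc).ne, hbc.ne, ha, hb, hc⟩
end

section
/- Let γ ∈ ℝ with γ < 0 or γ > 1, and let x̃ be a real root of x^3 + (2γ-1)x^2 + (γ(γ-1)-1)x + (1-2γ) = 0 with x̃ ∉ {1-γ, -γ}. Set φ = (1-γ)/(x̃+γ)^2 + γ/(x̃-(1-γ))^2. Then (1+φ)(1-φ) > 0. -/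
/-!
In the coordinate `z = 2 x + 2 γ - 1`, which puts the vortices at `z = ±1`, the stagnation-point
cubic is linear in `γ`: it reads `(2γ - 1) (z² + 3) = z (z² - 5)`. Eliminating `γ` collapses
`φ` to `12 / (z² + 3)`, and squaring gives `4 γ (γ - 1) (z² + 3)² = (z² - 9) (z² - 1)²`.
So `γ ∉ [0, 1]` forces `z² > 9`, i.e. `0 < φ < 1`.
-/

section StagnationPoint

variable {γ z : ℝ}

lemma weighted_inv_sq_eq_of_stagnation (h : (2 * γ - 1) * (z ^ 2 + 3) = z * (z ^ 2 - 5))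
    (hz₁ : z + 1 ≠ 0) (hz₂ : z - 1 ≠ 0) :
    (1 - γ) / ((z + 1) / 2) ^ 2 + γ / ((z - 1) / 2) ^ 2 = 12 / (z ^ 2 + 3) := by
  have hz : z ^ 2 + 3 ≠ 0 := by positivity
  field_simp
  linear_combination 8 * z * h

lemma mul_sq_eq_of_stagnation (h : (2 * γ - 1) * (z ^ 2 + 3) = z * (z ^ 2 - 5)) :
    4 * (γ * (γ - 1)) * (z ^ 2 + 3) ^ 2 = (z ^ 2 - 9) * (z ^ 2 - 1) ^ 2 := by
  linear_combination ((2 * γ - 1) * (z ^ 2 + 3) + z * (z ^ 2 - 5)) * h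

lemma nine_lt_sq_of_stagnation (h : (2 * γ - 1) * (z ^ 2 + 3) = z * (z ^ 2 - 5))
    (hγ : 0 < γ * (γ - 1)) : 9 < z ^ 2 := by
  have hprod : 0 < (z ^ 2 - 9) * (z ^ 2 - 1) ^ 2 := by
    rw [← mul_sq_eq_of_stagnation h]
    positivity
  linarith [pos_of_mul_pos_left hprod (sq_nonneg _)]

end StagnationPoint

theorem stmt_17 (γ xt : ℝ) (hγ : γ < 0 ∨ γ > 1)
    (hroot : xt ^ 3 + (2 * γ - 1) * xt ^ 2 + (γ * (γ - 1) - 1) * xt + (1 - 2 * γ) = 0)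
    (hne1 : xt ≠ 1 - γ) (hne2 : xt ≠ -γ) :
    (1 + ((1 - γ) / (xt + γ) ^ 2 + γ / (xt - (1 - γ)) ^ 2)) *
      (1 - ((1 - γ) / (xt + γ) ^ 2 + γ / (xt - (1 - γ)) ^ 2)) > 0 := by
  set z := 2 * xt + 2 * γ - 1
  have hstag : (2 * γ - 1) * (z ^ 2 + 3) = z * (z ^ 2 - 5) := by
    linear_combination (-8) * hroot
  have hz₁ : z + 1 ≠ 0 := fun h ↦ hne2 (by linarith)
  have hz₂ : z - 1 ≠ 0 := fun h ↦ hne1 (by linarith)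
  have hγ' : 0 < γ * (γ - 1) := by rcases hγ with h | h <;> nlinarith
  have h9 : 9 < z ^ 2 := nine_lt_sq_of_stagnation hstag hγ'
  rw [show xt + γ = (z + 1) / 2 by ring, show xt - (1 - γ) = (z - 1) / 2 by ring,
    weighted_inv_sq_eq_of_stagnation hstag hz₁ hz₂]
  refine mul_pos (by positivity) (sub_pos.mpr ((div_lt_one (by positivity)).mpr ?_))
  linarith
end
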